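/- Let n ≥ 1, N ≥ 1, and let μ ∈ ℤ^n. Then (Σ_{λ∈X_N} q^{(λ,λ+2ρ)}) · Q_μ · q^{−(μ,μ+2ρ)} = Σ_{λ∈X_N} q^{(λ,λ)} · S'_{λ,μ}. (Equivalently, the coefficients x_λ = q^{−(λ,2ρ)}/Σ_{ν∈X_N} q^{(ν,ν+2ρ)} solve Q_μ q^{−(μ+2ρ,μ)} = Σ_{λ∈X_N} x_λ q^{(λ+2ρ,λ)} S'_{λ,μ} whenever the normalizing sum is nonzero.) -/

import Mathlib

open Complex Finset

/-- `qp N r = exp(2πi r / N)`, i.e. `q^r` for `q = exp(2πi/N)`. -/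
noncomputable def qp (N : ℕ) (r : ℚ) : ℂ :=
  Complex.exp (2 * (Real.pi : ℂ) * Complex.I * (r : ℂ) / (N : ℂ))

/-- The Weyl vector of `osp(1|2n)`: `ρ_j = n - j + 1/2` for `j = 1, …, n`
(0-indexed: `ρ j = n - j - 1/2`). -/
def rhoV (n : ℕ) : Fin n → ℚ := fun j => (n : ℚ) - (j : ℚ) - 1/2

/-- The standard dot product on `ℚ^n`. -/
def dotp {n : ℕ} (x y : Fin n → ℚ) : ℚ := ∑ j, x j * y j

/-- Coercion of an integer vector to a rational vector. -/
def intC {n : ℕ} (lam : Fin n → ℤ) : Fin n → ℚ := fun j => (lam j : ℚ)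

/-- Coercion of an element of `X_M = {0,…,M-1}^n` to a rational vector. -/
def finC {n M : ℕ} (mu : Fin n → Fin M) : Fin n → ℚ := fun j => ((mu j : ℕ) : ℚ)

/-- The `j`-th standard basis vector of `ℚ^n`. -/
def stdB (n : ℕ) (j : Fin n) : Fin n → ℚ := fun l => if l = j then 1 else 0

/-- The hyperoctahedral group (Weyl group of `osp(1|2n)`): a permutation with signs. -/
abbrev HypOct (n : ℕ) := Equiv.Perm (Fin n) × (Fin n → ℤˣ)

/-- Action of the hyperoctahedral group on `ℚ^n` by signed permutation of coordinates. -/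
def Wact {n : ℕ} (σ : HypOct n) (x : Fin n → ℚ) : Fin n → ℚ :=
  fun j => ((σ.2 j : ℤ) : ℚ) * x (σ.1⁻¹ j)

/-- `ε'(σ) = sgn(π) · ∏_j s_j` for `σ = (π, s)`. -/
def epsW {n : ℕ} (σ : HypOct n) : ℤˣ :=
  Equiv.Perm.sign σ.1 * ∏ j, σ.2 j

/-- `S'_{λ,μ} = Σ_{σ∈W} ε'(σ) q^{2(λ+ρ, σ(μ+ρ))}` (for rational vectors `λ, μ`). -/
noncomputable def Sprime (n N : ℕ) (lam mu : Fin n → ℚ) : ℂ :=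
  ∑ σ : HypOct n,
    ((epsW σ : ℤ) : ℂ) * qp N (2 * dotp (lam + rhoV n) (Wact σ (mu + rhoV n)))

/-- `Q_μ = Σ_{σ∈W} ε'(σ) q^{2(ρ, σ(μ+ρ))}`. -/
noncomputable def Qmu (n N : ℕ) (mu : Fin n → ℤ) : ℂ :=
  ∑ σ : HypOct n,
    ((epsW σ : ℤ) : ℂ) * qp N (2 * dotp (rhoV n) (Wact σ (intC mu + rhoV n)))

/-- Gauss sum `G(N,m) = Σ_{j=0}^{N-1} q^{j(j+m)}` with `q = exp(2πi/N)`. -/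
noncomputable def GaussG (N : ℕ) (m : ℤ) : ℂ :=
  ∑ j : Fin N, qp N ((j : ℚ) * ((j : ℚ) + (m : ℚ)))

/-- `Σ_{μ ∈ X_M} q^{(μ, μ+2ρ)}` where `q = exp(2πi/N)`. -/
noncomputable def sumX (n N M : ℕ) : ℂ :=
  ∑ mu : Fin n → Fin M, qp N (dotp (finC mu) (finC mu + 2 • rhoV n))

/-- `Σ_{λ ∈ X_M} q^{(λ,λ)} S'_{λ,μ}` where `q = exp(2πi/N)`. -/
noncomputable def sumXS (n N M : ℕ) (mu : Fin n → ℤ) : ℂ :=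
  ∑ lam : Fin n → Fin M, qp N (dotp (finC lam) (finC lam)) * Sprime n N (finC lam) (intC mu)

/-! Complete the square: `(λ, λ + 2v) = |λ + v|² - |v|²`. When `v` has half-integral
coordinates, `Σ_{λ ∈ X_N} q^{|λ + v|²}` factors into one-dimensional sums
`Σ_{k < N} q^{(k + m + 1/2)²}`, which do not depend on `m ∈ ℤ` because `k ↦ q^{(k + 1/2)²}` has
period `N`; call their common value `G`. So `Σ_{λ ∈ X_N} q^{(λ, λ + 2v)} = q^{-|v|²} G^n`.
Taking `v = ρ` evaluates the left-hand side; in `Σ_λ q^{(λ,λ)} S'_{λ,μ}`, the term of `σ ∈ W` is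
`q^{(λ, λ + 2w)} q^{2(ρ, w)}` with `w = σ(μ + ρ)`, and `|w|² = |μ + ρ|² = |ρ|² + (μ, μ + 2ρ)`. -/

namespace Function.Periodic

theorem sum_range_comp_add_int {M : Type*} [AddCommMonoid M] {f : ℤ → M} {N : ℕ}
    (hf : Periodic f N) (m : ℤ) : ∑ k ∈ range N, f (k + m) = ∑ k ∈ range N, f k := by
  have step : ∀ m : ℤ, ∑ k ∈ range N, f (k + (m + 1)) = ∑ k ∈ range N, f (k + m) := by
    intro m
    cases N with
    | zero => simp
    | succ N =>
      have wrap : f ((N : ℤ) + (m + 1)) = f m := by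
        rw [show (N : ℤ) + (m + 1) = m + (N + 1 : ℕ) by push_cast; ring, hf]
      rw [sum_range_succ, sum_range_succ' (fun k : ℕ => f (k + m))]
      push_cast
      rw [wrap, zero_add]
      congr 1
      exact sum_congr rfl fun k _ => by ring_nf
  induction m using Int.induction_on with
  | zero => simp
  | succ m ih => rw [step, ih]
  | pred m ih => rw [← ih, ← step, sub_add_cancel]

end Function.Periodic

theorem qp_add (N : ℕ) (a b : ℚ) : qp N (a + b) = qp N a * qp N b := by
  unfold qp; rw [← Complex.exp_add]; congr 1; push_cast; ring

theorem qp_sum (N : ℕ) {ι : Type*} (s : Finset ι) (f : ι → ℚ) :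
    qp N (∑ j ∈ s, f j) = ∏ j ∈ s, qp N (f j) := by
  unfold qp; rw [← Complex.exp_sum]; congr 1; push_cast; rw [mul_sum, sum_div]

theorem qp_natCast_mul_int (N : ℕ) (m : ℤ) : qp N (N * m) = 1 := by
  rcases eq_or_ne N 0 with rfl | hN
  · simp [qp]
  rw [qp, show 2 * (Real.pi : ℂ) * I * (((N * m : ℚ)) : ℂ) / N = m * (2 * Real.pi * I) by
    push_cast; field_simp]
  exact Complex.exp_int_mul_two_pi_mul_I m

theorem qp_add_natCast_mul_int (N : ℕ) (a : ℚ) (m : ℤ) : qp N (a + N * m) = qp N a := by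
  rw [qp_add, qp_natCast_mul_int, mul_one]

theorem qp_halfInt_sq_periodic (N : ℕ) :
    Function.Periodic (fun k : ℤ => qp N (((k : ℚ) + 1/2) ^ 2)) N := by
  intro k
  have : (((k + N : ℤ) : ℚ) + 1/2) ^ 2 = ((k : ℚ) + 1/2) ^ 2 + N * ((2 * k + N + 1 : ℤ) : ℚ) := by
    push_cast; ring
  simp only [this, qp_add_natCast_mul_int]

def IsHalfInt (x : ℚ) : Prop := ∃ m : ℤ, x = m + 1/2

noncomputable def halfGauss (N : ℕ) : ℂ := ∑ k ∈ range N, qp N (((k : ℚ) + 1/2) ^ 2)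

theorem sum_range_qp_add_sq {N : ℕ} {v : ℚ} (hv : IsHalfInt v) :
    ∑ k ∈ range N, qp N (((k : ℚ) + v) ^ 2) = halfGauss N := by
  obtain ⟨m, rfl⟩ := hv
  have := (qp_halfInt_sq_periodic N).sum_range_comp_add_int m
  push_cast at this
  simpa only [halfGauss, add_assoc] using this

theorem IsHalfInt.int_add {x : ℚ} (hx : IsHalfInt x) (a : ℤ) : IsHalfInt (a + x) := by
  obtain ⟨m, rfl⟩ := hx
  exact ⟨a + m, by push_cast; ring⟩

theorem IsHalfInt.neg {x : ℚ} (hx : IsHalfInt x) : IsHalfInt (-x) := by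
  obtain ⟨m, rfl⟩ := hx
  exact ⟨-m - 1, by push_cast; ring⟩

theorem IsHalfInt.units_mul {x : ℚ} (hx : IsHalfInt x) (s : ℤˣ) : IsHalfInt ((s : ℤ) * x) := by
  rcases Int.units_eq_one_or s with rfl | rfl
  · simpa using hx
  · simpa using hx.neg

theorem isHalfInt_rhoV (n : ℕ) (j : Fin n) : IsHalfInt (rhoV n j) :=
  ⟨n - j - 1, by simp only [rhoV]; push_cast; ring⟩

theorem isHalfInt_wact {n : ℕ} (σ : HypOct n) {x : Fin n → ℚ} (hx : ∀ j, IsHalfInt (x j))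
    (j : Fin n) : IsHalfInt (Wact σ x j) :=
  (hx _).units_mul _

theorem dotp_wact_self {n : ℕ} (σ : HypOct n) (x : Fin n → ℚ) :
    dotp (Wact σ x) (Wact σ x) = dotp x x := by
  have sign_sq : ∀ s : ℤˣ, ((s : ℤ) : ℚ) * (s : ℤ) = 1 := fun s => by
    rcases Int.units_eq_one_or s with rfl | rfl <;> simp
  calc dotp (Wact σ x) (Wact σ x) = ∑ j, x (σ.1⁻¹ j) * x (σ.1⁻¹ j) :=
        sum_congr rfl fun j _ => by
          simp only [Wact]; linear_combination x (σ.1⁻¹ j) * x (σ.1⁻¹ j) * sign_sq (σ.2 j)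
    _ = dotp x x := Equiv.sum_comp σ.1⁻¹ fun j => x j * x j

theorem dotp_eq_dotProduct {n : ℕ} (x y : Fin n → ℚ) : dotp x y = dotProduct x y := rfl

theorem dotp_add_left {n : ℕ} (x y z : Fin n → ℚ) : dotp (x + y) z = dotp x z + dotp y z :=
  add_dotProduct x y z

theorem dotp_add_two_nsmul_right {n : ℕ} (x y v : Fin n → ℚ) :
    dotp x (y + 2 • v) = dotp x y + 2 * dotp x v := by
  rw [dotp_eq_dotProduct, dotProduct_add, dotProduct_smul, nsmul_eq_mul]; rfl

theorem dotp_add_self {n : ℕ} (x y : Fin n → ℚ) :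
    dotp (x + y) (x + y) = dotp x x + 2 * dotp x y + dotp y y := by
  simp only [dotp_eq_dotProduct, add_dotProduct, dotProduct_add, dotProduct_comm y x]; ring

theorem sum_qp_dotp_finC_add_self {n : ℕ} (N : ℕ) {v : Fin n → ℚ} (hv : ∀ j, IsHalfInt (v j)) :
    ∑ lam : Fin n → Fin N, qp N (dotp (finC lam + v) (finC lam + v)) = halfGauss N ^ n := by
  calc ∑ lam : Fin n → Fin N, qp N (dotp (finC lam + v) (finC lam + v))
      = ∏ j, ∑ k : Fin N, qp N (((k : ℚ) + v j) ^ 2) := by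
        rw [Fintype.prod_sum]
        exact sum_congr rfl fun lam _ => by simp only [dotp, qp_sum, finC, Pi.add_apply, sq]
    _ = ∏ _j : Fin n, halfGauss N := prod_congr rfl fun j _ => by
        rw [Fin.sum_univ_eq_sum_range (fun k => qp N (((k : ℚ) + v j) ^ 2)),
          sum_range_qp_add_sq (hv j)]
    _ = halfGauss N ^ n := by rw [prod_const, card_univ, Fintype.card_fin]

theorem sum_qp_dotp_finC_add_two_smul {n : ℕ} (N : ℕ) {v : Fin n → ℚ}
    (hv : ∀ j, IsHalfInt (v j)) :
    ∑ lam : Fin n → Fin N, qp N (dotp (finC lam) (finC lam + 2 • v))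
      = qp N (-dotp v v) * halfGauss N ^ n := by
  have complete_sq : ∀ x : Fin n → ℚ, dotp x (x + 2 • v) = dotp (x + v) (x + v) + -dotp v v :=
    fun x => by rw [dotp_add_two_nsmul_right, dotp_add_self]; ring
  simp only [complete_sq, qp_add]
  rw [← sum_mul, sum_qp_dotp_finC_add_self N hv, mul_comm]

theorem sumX_eq (n N : ℕ) : sumX n N N = qp N (-dotp (rhoV n) (rhoV n)) * halfGauss N ^ n :=
  sum_qp_dotp_finC_add_two_smul N (isHalfInt_rhoV n)

theorem sumXS_eq {n : ℕ} (N : ℕ) (mu : Fin n → ℤ) :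
    sumXS n N N mu
      = qp N (-dotp (intC mu + rhoV n) (intC mu + rhoV n)) * halfGauss N ^ n * Qmu n N mu := by
  simp only [sumXS, Sprime, Qmu, mul_sum]
  rw [sum_comm]
  refine sum_congr rfl fun σ _ => ?_
  set w := Wact σ (intC mu + rhoV n)
  have hw : ∀ j, IsHalfInt (w j) :=
    isHalfInt_wact σ fun j => (isHalfInt_rhoV n j).int_add (mu j)
  have regroup : ∀ x : Fin n → ℚ, dotp x x + 2 * dotp (x + rhoV n) w
      = dotp x (x + 2 • w) + 2 * dotp (rhoV n) w := fun x => by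
    rw [dotp_add_two_nsmul_right, dotp_add_left]; ring
  calc ∑ lam : Fin n → Fin N, qp N (dotp (finC lam) (finC lam))
        * (((epsW σ : ℤ) : ℂ) * qp N (2 * dotp (finC lam + rhoV n) w))
      = (∑ lam : Fin n → Fin N, qp N (dotp (finC lam) (finC lam + 2 • w)))
          * (((epsW σ : ℤ) : ℂ) * qp N (2 * dotp (rhoV n) w)) := by
        rw [sum_mul]
        refine sum_congr rfl fun lam _ => ?_
        rw [mul_left_comm, ← qp_add, regroup, qp_add]
        ring
    _ = _ := by
        rw [sum_qp_dotp_finC_add_two_smul N hw, dotp_wact_self]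

theorem x_lambda_solution_general (n N : ℕ) (mu : Fin n → ℤ) :
    sumX n N N * Qmu n N mu * qp N (-(dotp (intC mu) (intC mu + 2 • rhoV n))) =
      sumXS n N N mu := by
  have norm_shift : dotp (intC mu + rhoV n) (intC mu + rhoV n)
      = dotp (rhoV n) (rhoV n) + dotp (intC mu) (intC mu + 2 • rhoV n) := by
    rw [dotp_add_self, dotp_add_two_nsmul_right]; ring
  rw [sumX_eq, sumXS_eq, norm_shift, neg_add, qp_add]
  ring

/-- For `n ≥ 1`, `N ≥ 1` and `μ ∈ ℤ^n`,
`(Σ_{λ∈X_N} q^{(λ,λ+2ρ)}) · Q_μ · q^{−(μ,μ+2ρ)} = Σ_{λ∈X_N} q^{(λ,λ)} S'_{λ,μ}`;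
equivalently the coefficients `x_λ = q^{−(λ,2ρ)}/Σ_{ν∈X_N} q^{(ν,ν+2ρ)}` solve
`Q_μ q^{−(μ+2ρ,μ)} = Σ_{λ∈X_N} x_λ q^{(λ+2ρ,λ)} S'_{λ,μ}` when the normalizer is nonzero. -/
theorem x_lambda_solution (n N : ℕ) (hn : 1 ≤ n) (hN : 1 ≤ N) (mu : Fin n → ℤ) :
    sumX n N N * Qmu n N mu * qp N (-(dotp (intC mu) (intC mu + 2 • rhoV n))) =
      sumXS n N N mu :=
  x_lambda_solution_general n N mu
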